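/- arXiv:1911.08189 — 2 statements merged into one kernel-verified Lean document; each statement's English description precedes it below -/
import Mathlib

section
/- Let P be an L-convex polyomino and let the horizontal projection vector H_P = (h_1,...,h_n) record the number of cells in each row and V_P = (v_1,...,v_m) the number of cells in each column. Then both H_P and V_P are unimodal: there is an index i such that h_1 ≤ ... ≤ h_i ≥ ... ≥ h_n, and similarly for V_P. -/
/-- Two cells of `ℤ × ℤ` are adjacent if they share an edge. -/
def CellAdj (a b : ℤ × ℤ) : Prop :=
  (a.1 = b.1 ∧ (a.2 = b.2 + 1 ∨ b.2 = a.2 + 1)) ∨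
  (a.2 = b.2 ∧ (a.1 = b.1 + 1 ∨ b.1 = a.1 + 1))

/-- `P` is an L-convex polyomino: it is row convex, column convex, and any two of
its cells are joined by a path of distinct cells of `P` with at most one change of
direction. Cells are recorded as `(row, column)`. -/
def IsLConvex (P : Finset (ℤ × ℤ)) : Prop :=
  (∀ i j j' j'' : ℤ, (i, j) ∈ P → (i, j'') ∈ P → j ≤ j' → j' ≤ j'' → (i, j') ∈ P) ∧
  (∀ i i' i'' j : ℤ, (i, j) ∈ P → (i'', j) ∈ P → i ≤ i' → i' ≤ i'' → (i', j) ∈ P) ∧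
  (∀ a ∈ P, ∀ b ∈ P, ∃ (k : ℕ) (c : ℕ → ℤ × ℤ),
    c 0 = a ∧ c k = b ∧ (∀ i ≤ k, c i ∈ P) ∧
    (∀ i < k, CellAdj (c i) (c (i + 1))) ∧
    (∀ i j, i ≤ k → j ≤ k → c i = c j → i = j) ∧
    ((Finset.Ioo 0 k).filter (fun i =>
      (c (i - 1)).1 ≠ (c (i + 1)).1 ∧ (c (i - 1)).2 ≠ (c (i + 1)).2)).card ≤ 1)

/-- Number of cells of `P` in row `i`. -/
def rowCount (P : Finset (ℤ × ℤ)) (i : ℤ) : ℕ := (P.filter (fun c => c.1 = i)).card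

/-- Number of cells of `P` in column `j`. -/
def colCount (P : Finset (ℤ × ℤ)) (j : ℤ) : ℕ := (P.filter (fun c => c.2 = j)).card


/-!
Along an edge path, a cell that is not a turn continues in the direction of the previous step,
so a path with at most one turn is made of two straight segments. Hence for any two cells `a`,
`b` of an L-convex polyomino one of the corner cells `(a.1, b.2)`, `(b.1, a.2)` belongs to it,
and any two rows are nested as sets of columns. Let `i` be a longest row. For rows `a ≤ b ≤ i`,
either row `a` lies in row `i` and hence, by column convexity, in row `b`; or row `i` lies in
row `a`, hence in row `b`, and `|row a| ≤ |row i| ≤ |row b|`. Columns follow by transposition.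
-/

open Finset

def IsTurn (c : ℕ → ℤ × ℤ) (i : ℕ) : Prop :=
  (c (i - 1)).1 ≠ (c (i + 1)).1 ∧ (c (i - 1)).2 ≠ (c (i + 1)).2

lemma straight_of_forall_not_isTurn {c : ℕ → ℤ × ℤ} {u v : ℕ} (huv : u ≤ v)
    (hadj : ∀ i, u ≤ i → i < v → CellAdj (c i) (c (i + 1)))
    (hturn : ∀ i, u < i → i < v → ¬ IsTurn c i) :
    (∀ i, u ≤ i → i ≤ v → (c i).1 = (c u).1) ∨ (∀ i, u ≤ i → i ≤ v → (c i).2 = (c u).2) := by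
  induction v, huv using Nat.le_induction with
  | base => exact .inl fun i h₁ h₂ => by rw [le_antisymm h₂ h₁]
  | succ n hun ih =>
    have hadj_n := hadj n hun n.lt_succ_self
    unfold CellAdj at hadj_n
    by_cases hnu : n = u
    · subst hnu
      rcases hadj_n with ⟨hrow, -⟩ | ⟨hcol, -⟩ <;> [left; right] <;>
        intro i h₁ h₂ <;> obtain rfl | rfl : i = n ∨ i = n + 1 := by omega
      all_goals simp [*]
    obtain ⟨m, rfl⟩ : ∃ m, n = m + 1 := ⟨n - 1, by omega⟩
    have hadj_m := hadj m (by omega) (by omega)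
    have hturn_n := hturn (m + 1) (by omega) (by omega)
    unfold CellAdj at hadj_m
    simp only [IsTurn, Nat.add_sub_cancel] at hturn_n
    rcases ih (fun i h₁ h₂ => hadj i h₁ (by omega)) (fun i h₁ h₂ => hturn i h₁ (by omega))
      with h | h <;> [left; right] <;>
    · intro i h₁ h₂
      rcases Nat.le_add_one_iff.mp h₂ with h₂ | rfl
      · exact h i h₁ h₂
      · have := h m (by omega) (by omega)
        have := h (m + 1) (by omega) le_rfl
        omega

lemma line_of_forall_not_isTurn {c : ℕ → ℤ × ℤ} {u v : ℕ} (huv : u ≤ v)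
    (hadj : ∀ i, u ≤ i → i < v → CellAdj (c i) (c (i + 1)))
    (hturn : ∀ i, u < i → i < v → ¬ IsTurn c i) :
    (c u).1 = (c v).1 ∨ (c u).2 = (c v).2 :=
  (straight_of_forall_not_isTurn huv hadj hturn).imp (fun h => (h v huv le_rfl).symm)
    (fun h => (h v huv le_rfl).symm)

lemma IsLConvex.corner_mem {P : Finset (ℤ × ℤ)} (hP : IsLConvex P) {a b : ℤ × ℤ}
    (ha : a ∈ P) (hb : b ∈ P) : (a.1, b.2) ∈ P ∨ (b.1, a.2) ∈ P := by
  obtain ⟨k, c, rfl, rfl, hmem, hadj, -, hturns⟩ := hP.2.2 a ha b hb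
  obtain ⟨t, htk, hnt⟩ : ∃ t ≤ k, ∀ i, 0 < i → i < k → i ≠ t → ¬ IsTurn c i := by
    obtain ⟨x, hx⟩ := Finset.card_le_one_iff_subset_singleton.mp hturns
    refine ⟨min x k, min_le_right x k, fun i h₀ hk ht hi => ?_⟩
    have := hx (mem_filter.mpr ⟨mem_Ioo.mpr ⟨h₀, hk⟩, hi⟩)
    rw [mem_singleton] at this
    omega
  have h₁ := line_of_forall_not_isTurn (Nat.zero_le t) (fun i _ hi => hadj i (by omega))
    (fun i h₁ h₂ => hnt i h₁ (by omega) (by omega))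
  have h₂ := line_of_forall_not_isTurn htk (fun i _ hi => hadj i hi)
    (fun i h₁ h₂ => hnt i (by omega) h₂ (by omega))
  rcases h₁ with h₁ | h₁ <;> rcases h₂ with h₂ | h₂
  · exact .inl (by rw [h₁, h₂]; exact hmem k le_rfl)
  · exact .inl (by rw [h₁, ← h₂]; exact hmem t htk)
  · exact .inr (by rw [h₁, ← h₂]; exact hmem t htk)
  · exact .inr (by rw [h₁, h₂]; exact hmem k le_rfl)

def IsUnimodal (f : ℤ → ℕ) : Prop :=
  ∃ i : ℤ, (∀ a b : ℤ, a ≤ b → b ≤ i → f a ≤ f b) ∧ (∀ a b : ℤ, i ≤ a → a ≤ b → f b ≤ f a)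

lemma rowCount_le_rowCount {P : Finset (ℤ × ℤ)} {r r' : ℤ}
    (h : ∀ j, (r, j) ∈ P → (r', j) ∈ P) : rowCount P r ≤ rowCount P r' := by
  refine card_le_card_of_injOn (fun x => (r', x.2)) (fun x hx => ?_) (fun x hx y hy hxy => ?_)
  · obtain ⟨hxP, rfl⟩ := mem_filter.mp (mem_coe.mp hx)
    exact mem_filter.mpr ⟨h x.2 hxP, rfl⟩
  · have hx₁ := (mem_filter.mp (mem_coe.mp hx)).2
    have hy₁ := (mem_filter.mp (mem_coe.mp hy)).2
    exact Prod.ext (hx₁.trans hy₁.symm) (Prod.mk.inj hxy).2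

lemma IsLConvex.rows_nested {P : Finset (ℤ × ℤ)} (hP : IsLConvex P) (r r' : ℤ) :
    (∀ j, (r, j) ∈ P → (r', j) ∈ P) ∨ (∀ j, (r', j) ∈ P → (r, j) ∈ P) := by
  by_contra! ⟨⟨j, hj, hj'⟩, ⟨j', hj₂, hj₂'⟩⟩
  exact (hP.corner_mem hj hj₂).elim hj₂' hj'

lemma IsLConvex.isUnimodal_rowCount {P : Finset (ℤ × ℤ)} (hP : IsLConvex P) (hne : P.Nonempty) :
    IsUnimodal (rowCount P) := by
  obtain ⟨i, -, hmax⟩ := exists_max_image (P.image Prod.fst) (rowCount P) (hne.image _)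
  have hmax : ∀ r, rowCount P r ≤ rowCount P i := fun r => by
    by_cases hr : r ∈ P.image Prod.fst
    · exact hmax r hr
    · refine (card_eq_zero.mpr (filter_eq_empty_iff.mpr fun x hx hx₁ => ?_)).trans_le
        (Nat.zero_le _)
      exact hr (mem_image.mpr ⟨x, hx, hx₁⟩)
  have hcol := hP.2.1
  have key : ∀ r s, (r ≤ s ∧ s ≤ i ∨ i ≤ s ∧ s ≤ r) → rowCount P r ≤ rowCount P s := by
    intro r s hrs
    rcases hP.rows_nested r i with h | h
    · refine rowCount_le_rowCount fun j hj => ?_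
      rcases hrs with ⟨h₁, h₂⟩ | ⟨h₁, h₂⟩
      · exact hcol r s i j hj (h j hj) h₁ h₂
      · exact hcol i s r j (h j hj) hj h₁ h₂
    · refine (hmax r).trans (rowCount_le_rowCount fun j hj => ?_)
      rcases hrs with ⟨h₁, h₂⟩ | ⟨h₁, h₂⟩
      · exact hcol r s i j (h j hj) hj h₁ h₂
      · exact hcol i s r j hj (h j hj) h₁ h₂
  exact ⟨i, fun a b hab hbi => key a b (.inl ⟨hab, hbi⟩),
    fun a b hia hab => key b a (.inr ⟨hia, hab⟩)⟩

lemma CellAdj.swap {a b : ℤ × ℤ} (h : CellAdj a b) : CellAdj a.swap b.swap := by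
  unfold CellAdj at *
  tauto

lemma IsLConvex.transpose {P : Finset (ℤ × ℤ)} (hP : IsLConvex P) :
    IsLConvex (P.map (Equiv.prodComm ℤ ℤ).toEmbedding) := by
  simp only [IsLConvex, mem_map_equiv, Equiv.prodComm_symm, Equiv.prodComm_apply,
    Prod.swap_prod_mk]
  refine ⟨fun i j j' j'' => hP.2.1 j j' j'' i, fun i i' i'' j => hP.1 j i i' i'', ?_⟩
  intro a ha b hb
  obtain ⟨k, c, h₀, hk, hmem, hadj, hinj, hturns⟩ := hP.2.2 a.swap ha b.swap hb
  refine ⟨k, Prod.swap ∘ c, by simp [h₀], by simp [hk], fun i hi => by simpa using hmem i hi,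
    fun i hi => (hadj i hi).swap, fun i j hi hj h => hinj i j hi hj (Prod.swap_injective h), ?_⟩
  convert hturns using 2
  ext i
  simp only [Function.comp_apply, Prod.fst_swap, Prod.snd_swap, and_comm]

lemma rowCount_map_prodComm (P : Finset (ℤ × ℤ)) :
    rowCount (P.map (Equiv.prodComm ℤ ℤ).toEmbedding) = colCount P := by
  ext j
  simp only [rowCount, colCount, filter_map, card_map]
  rfl

/-- The horizontal and vertical projection vectors of an L-convex polyomino are
unimodal: there is a row index `i` with `rowCount` weakly increasing up to `i` and
weakly decreasing afterwards, and similarly a column index for `colCount`. -/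
theorem stmt6 (P : Finset (ℤ × ℤ)) (hne : P.Nonempty) (hP : IsLConvex P) :
    (∃ i : ℤ, (∀ a b : ℤ, a ≤ b → b ≤ i → rowCount P a ≤ rowCount P b) ∧
      (∀ a b : ℤ, i ≤ a → a ≤ b → rowCount P b ≤ rowCount P a)) ∧
    (∃ j : ℤ, (∀ a b : ℤ, a ≤ b → b ≤ j → colCount P a ≤ colCount P b) ∧
      (∀ a b : ℤ, j ≤ a → a ≤ b → colCount P b ≤ colCount P a)) := by
  have hcol := hP.transpose.isUnimodal_rowCount hne.map
  rw [rowCount_map_prodComm] at hcol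
  exact ⟨hP.isUnimodal_rowCount hne, hcol⟩
end

section
/- Let P be an L-convex polyomino and P* the Ferrer diagram obtained by sorting the row lengths and column lengths of P in weakly decreasing order. Then for every k, the number of placements of k non-attacking rooks on P equals the number on P*; in particular the maximal numbers of non-attacking rooks on P and on P* coincide. -/
/-- The multiset of row lengths of `P` (one entry per occupied row). -/
def rowMultiset (P : Finset (ℤ × ℤ)) : Multiset ℕ :=
  (P.image Prod.fst).val.map (rowCount P)

/-- The multiset of column lengths of `P` (one entry per occupied column). -/
def colMultiset (P : Finset (ℤ × ℤ)) : Multiset ℕ :=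
  (P.image Prod.snd).val.map (colCount P)

/-- The Ferrer diagram (as a set of cells in `ℤ × ℤ`) with `n` left-justified
rows, row `i` (0-based) having `h i` cells. -/
def ferrerCellsZ (n : ℕ) (h : ℕ → ℕ) : Finset (ℤ × ℤ) :=
  (Finset.range n).biUnion
    (fun i => (Finset.range (h i)).image (fun (j : ℕ) => ((i : ℤ), (j : ℤ))))

/-- Placements of `k` non-attacking rooks on the cell set `P`. -/
def rookPlacements {α β : Type*} [DecidableEq α] [DecidableEq β]
    (P : Finset (α × β)) (r : ℕ) : Finset (Finset (α × β)) :=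
  P.powerset.filter (fun R => R.card = r ∧
    ∀ a ∈ R, ∀ b ∈ R, a ≠ b → a.1 ≠ b.1 ∧ a.2 ≠ b.2)

/-!
Any two cells `a, b` of an L-convex polyomino are joined by a path with at most one turn; the cell
at the turn is one of the corners `(a.1, b.2)`, `(b.1, a.2)`. Hence the rows of `P`, as sets of
columns, form a chain under inclusion, as do the rows of a Ferrers diagram. Let `r_k(B)` count the
placements of `k` non-attacking rooks on a board `B` with nested rows and let `R` be a longest row:
the `k` columns used by a placement on `B \ R` all lie in `R`, so
`r_{k+1}(B) = r_{k+1}(B \ R) + (|R| - k) r_k(B \ R)`. By induction on the number of rows, the rook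
numbers of such a board depend only on its multiset of row lengths.
-/

open Finset

theorem exists_forall_lt_and_forall_not_of_subsingleton_changes {p : ℕ → Prop} {k : ℕ}
    (h0 : 0 < k → p 0)
    (hchange : {i | 0 < i ∧ i < k ∧ ¬(p (i - 1) ↔ p i)}.Subsingleton) :
    ∃ t ≤ k, (∀ i < t, p i) ∧ ∀ i, t ≤ i → i < k → ¬p i := by
  induction k with
  | zero => exact ⟨0, le_rfl, by omega, by omega⟩
  | succ k ih =>
    obtain ⟨t, htk, hlt, hge⟩ := ih (fun hk => h0 (by omega))
      (hchange.anti fun i ⟨hi0, hik, hi⟩ => ⟨hi0, by omega, hi⟩)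
    by_cases hpk : p k
    · rcases htk.lt_or_eq with htk | rfl
      · have ht0 : 0 < t := Nat.pos_of_ne_zero fun ht => hge 0 ht.le (ht ▸ htk) (h0 (by omega))
        -- `t` and `k` would be two distinct changes
        have := hchange (x := t) ⟨ht0, by omega, ?_⟩ (y := k) ⟨by omega, by omega, ?_⟩
        · omega
        · simp [hlt (t - 1) (by omega), hge t le_rfl htk]
        · simp [hge (k - 1) (by omega) (by omega), hpk]
      · refine ⟨t + 1, le_rfl, fun i hi => ?_, by omega⟩
        rcases Nat.lt_succ_iff_lt_or_eq.mp hi with hi | rfl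
        exacts [hlt i hi, hpk]
    · refine ⟨t, by omega, hlt, fun i hti hik => ?_⟩
      rcases Nat.lt_succ_iff_lt_or_eq.mp hik with hik | rfl
      exacts [hge i hti hik, hpk]

theorem eq_of_forall_eq_succ {α : Type*} {f : ℕ → α} {a b : ℕ} (hab : a ≤ b)
    (h : ∀ i, a ≤ i → i < b → f i = f (i + 1)) : f a = f b := by
  induction b, hab using Nat.le_induction with
  | base => rfl
  | succ b hab ih => rw [ih fun i h₁ h₂ => h i h₁ (by omega), h b hab (by omega)]

theorem exists_corner_index {α β : Type*} {r : ℕ → α} {s : ℕ → β} {k : ℕ}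
    (hstep : ∀ i < k, (r i = r (i + 1) ↔ s i ≠ s (i + 1)))
    (hturn : {i | 0 < i ∧ i < k ∧ r (i - 1) ≠ r (i + 1) ∧ s (i - 1) ≠ s (i + 1)}.Subsingleton)
    (h0 : 0 < k → r 0 = r 1) :
    ∃ t ≤ k, r t = r 0 ∧ s t = s k := by
  have hchange : {i | 0 < i ∧ i < k ∧ ¬(r (i - 1) = r (i - 1 + 1) ↔ r i = r (i + 1))} ⊆
      {i | 0 < i ∧ i < k ∧ r (i - 1) ≠ r (i + 1) ∧ s (i - 1) ≠ s (i + 1)} := by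
    rintro i ⟨hi0, hik, hi⟩
    obtain ⟨j, rfl⟩ : ∃ j, i = j + 1 := ⟨i - 1, by omega⟩
    have hstep₁ := hstep j (by omega)
    have hstep₂ := hstep (j + 1) hik
    simp only [Nat.add_sub_cancel] at hi ⊢
    exact ⟨hi0, hik, by grind⟩
  obtain ⟨t, htk, hrow, hcol⟩ :=
    exists_forall_lt_and_forall_not_of_subsingleton_changes (p := fun i => r i = r (i + 1)) h0
      (hturn.anti hchange)
  refine ⟨t, htk, (eq_of_forall_eq_succ t.zero_le fun i _ hi => hrow i hi).symm,
    eq_of_forall_eq_succ htk fun i hti hik => ?_⟩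
  by_contra hs
  exact hcol i hti hik ((hstep i hik).mpr hs)

section Boards

variable {α β : Type*}

def CornerClosed (B : Finset (α × β)) : Prop :=
  ∀ a ∈ B, ∀ b ∈ B, (a.1, b.2) ∈ B ∨ (b.1, a.2) ∈ B

section EraseRow

variable [DecidableEq α]

def eraseRow (B : Finset (α × β)) (i : α) : Finset (α × β) :=
  B.filter (·.1 ≠ i)

theorem mem_eraseRow {B : Finset (α × β)} {i : α} {c : α × β} :
    c ∈ eraseRow B i ↔ c ∈ B ∧ c.1 ≠ i :=
  mem_filter

theorem image_fst_eraseRow (B : Finset (α × β)) (i : α) :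
    (eraseRow B i).image Prod.fst = (B.image Prod.fst).erase i := by
  ext j
  simp only [mem_image, mem_erase, mem_eraseRow]
  constructor
  · rintro ⟨c, ⟨hc, hci⟩, rfl⟩
    exact ⟨hci, c, hc, rfl⟩
  · rintro ⟨hji, c, hc, rfl⟩
    exact ⟨c, ⟨hc, hji⟩, rfl⟩

variable [DecidableEq β]

def rowSet (B : Finset (α × β)) (i : α) : Finset β :=
  (B.filter (·.1 = i)).image Prod.snd

@[simp]
theorem mem_rowSet {B : Finset (α × β)} {i : α} {j : β} : j ∈ rowSet B i ↔ (i, j) ∈ B := by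
  simp [rowSet]

def RowsNested (B : Finset (α × β)) : Prop :=
  ∀ i i', rowSet B i ⊆ rowSet B i' ∨ rowSet B i' ⊆ rowSet B i

theorem CornerClosed.rowsNested {B : Finset (α × β)} (hB : CornerClosed B) : RowsNested B := by
  intro i i'
  refine or_iff_not_imp_left.mpr fun hnot => ?_
  obtain ⟨j, hj, hj'⟩ := not_subset.mp hnot
  intro j' hj''
  rw [mem_rowSet] at *
  exact (hB _ hj _ hj'').resolve_right hj'

theorem rowSet_eraseRow (B : Finset (α × β)) (i j : α) :
    rowSet (eraseRow B i) j = if j = i then ∅ else rowSet B j := by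
  ext y
  split_ifs with hj <;> simp [mem_eraseRow, hj]

theorem RowsNested.eraseRow {B : Finset (α × β)} (hB : RowsNested B) (i : α) :
    RowsNested (eraseRow B i) := by
  intro j j'
  simp only [rowSet_eraseRow]
  split_ifs
  all_goals first | exact .inl (empty_subset _) | exact .inr (empty_subset _) | exact hB j j'

theorem mem_rookPlacements {B R : Finset (α × β)} {r : ℕ} :
    R ∈ rookPlacements B r ↔
      R ⊆ B ∧ #R = r ∧ ∀ a ∈ R, ∀ b ∈ R, a ≠ b → a.1 ≠ b.1 ∧ a.2 ≠ b.2 := by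
  simp [rookPlacements]

theorem rookPlacements_zero (B : Finset (α × β)) : rookPlacements B 0 = {∅} := by
  ext R
  simp only [mem_rookPlacements, card_eq_zero, mem_singleton]
  exact ⟨fun h => h.2.1, by rintro rfl; simp⟩

theorem filter_rookPlacements_forall_fst_ne (B : Finset (α × β)) (i : α) (r : ℕ) :
    (rookPlacements B r).filter (fun R => ∀ c ∈ R, c.1 ≠ i) = rookPlacements (eraseRow B i) r := by
  ext R
  simp only [mem_filter, mem_rookPlacements, subset_iff, mem_eraseRow]
  grind

theorem insert_mem_rookPlacements_succ {B S : Finset (α × β)} {i : α} {j : β} {k : ℕ}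
    (hS : S ∈ rookPlacements (eraseRow B i) k) (hij : (i, j) ∈ B) (hj : j ∉ S.image Prod.snd) :
    insert (i, j) S ∈ rookPlacements B (k + 1) := by
  rw [mem_rookPlacements] at hS ⊢
  obtain ⟨hSB, hSk, hSrooks⟩ := hS
  have hrow : ∀ c ∈ S, c.1 ≠ i := fun c hc => (mem_eraseRow.mp (hSB hc)).2
  simp only [mem_image, not_exists, not_and] at hj
  refine ⟨insert_subset hij fun c hc => (mem_eraseRow.mp (hSB hc)).1,
    by rw [card_insert_of_notMem fun h => hrow _ h rfl, hSk], ?_⟩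
  simp only [mem_insert]
  rintro a (rfl | ha) b (rfl | hb) hab
  · exact absurd rfl hab
  · exact ⟨(hrow b hb).symm, fun h => hj b hb h.symm⟩
  · exact ⟨hrow a ha, hj a ha⟩
  · exact hSrooks a ha b hb hab

theorem erase_mem_rookPlacements_eraseRow {B R : Finset (α × β)} {k : ℕ} {x : α × β}
    (hR : R ∈ rookPlacements B (k + 1)) (hx : x ∈ R) :
    R.erase x ∈ rookPlacements (eraseRow B x.1) k ∧ x.2 ∉ (R.erase x).image Prod.snd := by
  rw [mem_rookPlacements] at hR ⊢
  obtain ⟨hRB, hRk, hRrooks⟩ := hR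
  refine ⟨⟨fun c hc => mem_eraseRow.mpr ⟨hRB (mem_of_mem_erase hc),
      (hRrooks c (mem_of_mem_erase hc) x hx (ne_of_mem_erase hc)).1⟩,
    by rw [card_erase_of_mem hx, hRk, Nat.add_sub_cancel],
    fun a ha b hb => hRrooks a (mem_of_mem_erase ha) b (mem_of_mem_erase hb)⟩, ?_⟩
  simp only [mem_image, mem_erase, not_exists, not_and]
  exact fun c hcx => (hRrooks c hcx.2 x hx hcx.1).2

theorem eraseRow_insert_of_subset {S : Finset (α × β)} {B : Finset (α × β)} {i : α} {j : β}
    (hS : S ⊆ eraseRow B i) : eraseRow (insert (i, j) S) i = S := by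
  ext c
  simp only [mem_eraseRow, mem_insert]
  have hrow : ∀ c ∈ S, c.1 ≠ i := fun c hc => (mem_eraseRow.mp (hS hc)).2
  grind

theorem card_rookPlacements_succ (B : Finset (α × β)) (i : α) (k : ℕ) :
    #(rookPlacements B (k + 1)) = #(rookPlacements (eraseRow B i) (k + 1)) +
      ∑ S ∈ rookPlacements (eraseRow B i) k, #(rowSet B i \ S.image Prod.snd) := by
  rw [← card_filter_add_card_filter_not (fun R => ∀ c ∈ R, c.1 ≠ i),
    filter_rookPlacements_forall_fst_ne, ← card_sigma]
  congr 1
  symm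
  refine card_nbij (fun x => insert (i, x.2) x.1) ?_ ?_ ?_
  · rintro ⟨S, j⟩ hSj
    simp only [coe_sigma, Set.mem_sigma_iff, mem_coe, mem_sdiff, mem_rowSet] at hSj
    simp only [mem_coe, mem_filter, not_forall, not_not]
    exact ⟨insert_mem_rookPlacements_succ hSj.1 hSj.2.1 hSj.2.2, (i, j), mem_insert_self _ _, rfl⟩
  · rintro ⟨S, j⟩ hSj ⟨S', j'⟩ hSj' heq
    simp only [coe_sigma, Set.mem_sigma_iff, mem_coe, mem_rookPlacements] at hSj hSj' heq
    have hSS' : S = S' := by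
      rw [← eraseRow_insert_of_subset (j := j) hSj.1.1, heq, eraseRow_insert_of_subset hSj'.1.1]
    subst hSS'
    have : (i, j) ∈ insert (i, j') S := heq ▸ mem_insert_self _ _
    rcases mem_insert.mp this with h | h
    · simp_all
    · exact absurd rfl (mem_eraseRow.mp (hSj.1.1 h)).2
  · intro R hR
    simp only [mem_coe, mem_filter, not_forall, not_not] at hR
    obtain ⟨hR, x, hx, rfl⟩ := hR
    obtain ⟨hS, hcol⟩ := erase_mem_rookPlacements_eraseRow hR hx
    refine ⟨⟨R.erase x, x.2⟩, ?_, insert_erase hx⟩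
    simp only [coe_sigma, Set.mem_sigma_iff, mem_coe, mem_sdiff, mem_rowSet]
    exact ⟨hS, (mem_rookPlacements.mp hR).1 hx, hcol⟩

theorem card_rowSet_sdiff_image_snd {B S : Finset (α × β)} {i : α} {k : ℕ}
    (hi : ∀ i', rowSet B i' ⊆ rowSet B i) (hS : S ∈ rookPlacements (eraseRow B i) k) :
    #(rowSet B i \ S.image Prod.snd) = #(rowSet B i) - k := by
  obtain ⟨hSB, hSk, hSrooks⟩ := mem_rookPlacements.mp hS
  have hcols : S.image Prod.snd ⊆ rowSet B i := by
    simp only [subset_iff, mem_image]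
    rintro _ ⟨c, hc, rfl⟩
    exact hi c.1 (mem_rowSet.mpr (mem_eraseRow.mp (hSB hc)).1)
  have hcard : #(S.image Prod.snd) = k :=
    hSk ▸ card_image_of_injOn fun a ha b hb hab =>
      by_contra fun hne => (hSrooks a ha b hb hne).2 hab
  rw [card_sdiff_of_subset hcols, hcard]

theorem card_rookPlacements_succ_of_forall_rowSet_subset {B : Finset (α × β)} {i : α}
    (hi : ∀ i', rowSet B i' ⊆ rowSet B i) (k : ℕ) :
    #(rookPlacements B (k + 1)) = #(rookPlacements (eraseRow B i) (k + 1)) +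
      (#(rowSet B i) - k) * #(rookPlacements (eraseRow B i) k) := by
  rw [card_rookPlacements_succ B i k,
    sum_congr rfl fun S hS => card_rowSet_sdiff_image_snd hi hS, sum_const, smul_eq_mul,
    mul_comm]

end EraseRow

end Boards

theorem CellAdj.fst_eq_iff_snd_ne {a b : ℤ × ℤ} (h : CellAdj a b) : a.1 = b.1 ↔ a.2 ≠ b.2 := by
  unfold CellAdj at h
  omega

theorem IsLConvex.cornerClosed {P : Finset (ℤ × ℤ)} (hP : IsLConvex P) : CornerClosed P := by
  intro a ha b hb
  obtain ⟨k, c, rfl, rfl, hmem, hadj, -, hturn⟩ := hP.2.2 a ha b hb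
  have hstep (i : ℕ) (hi : i < k) : (c i).1 = (c (i + 1)).1 ↔ (c i).2 ≠ (c (i + 1)).2 :=
    (hadj i hi).fst_eq_iff_snd_ne
  have hturn' : {i | 0 < i ∧ i < k ∧
      (c (i - 1)).1 ≠ (c (i + 1)).1 ∧ (c (i - 1)).2 ≠ (c (i + 1)).2}.Subsingleton :=
    fun i hi j hj =>
      card_le_one.mp hturn i (by simpa [and_assoc] using hi) j (by simpa [and_assoc] using hj)
  by_cases h0 : 0 < k → (c 0).1 = (c 1).1
  · obtain ⟨t, htk, hrow, hcol⟩ := exists_corner_index hstep hturn' h0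
    left
    rw [← hrow, ← hcol]
    exact hmem t htk
  · -- the path starts vertically: run the same argument with rows and columns exchanged
    obtain ⟨hk, h0⟩ := Classical.not_imp.mp h0
    obtain ⟨t, htk, hcol, hrow⟩ := exists_corner_index (r := fun i => (c i).2)
      (s := fun i => (c i).1) (fun i hi => iff_not_comm.mp (hstep i hi))
      (hturn'.anti fun i ⟨hi0, hik, hr, hs⟩ => ⟨hi0, hik, hs, hr⟩)
      fun _ => not_not.mp (mt (hstep 0 hk).mpr h0)
    right
    rw [← hrow, ← hcol]
    exact hmem t htk

theorem mem_ferrerCellsZ {n : ℕ} {h : ℕ → ℕ} {x y : ℤ} :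
    (x, y) ∈ ferrerCellsZ n h ↔ ∃ i : ℕ, i < n ∧ x = i ∧ ∃ j : ℕ, j < h i ∧ y = j := by
  simp only [ferrerCellsZ, mem_biUnion, mem_image, mem_range, Prod.mk.injEq]
  grind

theorem cornerClosed_ferrerCellsZ {n : ℕ} {h : ℕ → ℕ}
    (hdec : ∀ i j : ℕ, i ≤ j → j < n → h j ≤ h i) : CornerClosed (ferrerCellsZ n h) := by
  rintro ⟨x, y⟩ ha ⟨x', y'⟩ hb
  obtain ⟨i, hi, rfl, j, hj, rfl⟩ := mem_ferrerCellsZ.mp ha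
  obtain ⟨i', hi', rfl, j', hj', rfl⟩ := mem_ferrerCellsZ.mp hb
  rcases le_total i i' with hle | hle
  · exact .inl (mem_ferrerCellsZ.mpr ⟨i, hi, rfl, j', hj'.trans_le (hdec i i' hle hi'), rfl⟩)
  · exact .inr (mem_ferrerCellsZ.mpr ⟨i', hi', rfl, j, hj.trans_le (hdec i' i hle hi), rfl⟩)

theorem rowCount_eq_card_rowSet (B : Finset (ℤ × ℤ)) (i : ℤ) : rowCount B i = #(rowSet B i) :=
  (card_image_of_injOn fun _ ha _ hb hab =>
    Prod.ext ((mem_filter.mp ha).2.trans (mem_filter.mp hb).2.symm) hab).symm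

theorem rowMultiset_eq_zero_iff {B : Finset (ℤ × ℤ)} : rowMultiset B = 0 ↔ B = ∅ := by
  rw [rowMultiset, Multiset.map_eq_zero, val_eq_zero, image_eq_empty]

theorem rowMultiset_eq_cons {B : Finset (ℤ × ℤ)} {i : ℤ} (hi : i ∈ B.image Prod.fst) :
    rowMultiset B = rowCount B i ::ₘ rowMultiset (eraseRow B i) := by
  rw [rowMultiset, rowMultiset]
  conv_lhs => rw [← insert_erase hi]
  rw [insert_val_of_notMem (notMem_erase i _), Multiset.map_cons, image_fst_eraseRow]
  congr 1
  refine Multiset.map_congr rfl fun j hj => ?_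
  rw [rowCount_eq_card_rowSet, rowCount_eq_card_rowSet, rowSet_eraseRow,
    if_neg (ne_of_mem_erase (mem_val.mp hj))]

theorem exists_max_rowCount {B : Finset (ℤ × ℤ)} (hB : B.Nonempty) :
    ∃ i ∈ B.image Prod.fst, ∀ m ∈ rowMultiset B, m ≤ rowCount B i := by
  obtain ⟨i, hi, hmax⟩ := exists_max_image (B.image Prod.fst) (rowCount B) (hB.image _)
  refine ⟨i, hi, fun m hm => ?_⟩
  obtain ⟨j, hj, rfl⟩ := Multiset.mem_map.mp hm
  exact hmax j hj

theorem RowsNested.rowSet_subset_of_forall_le {B : Finset (ℤ × ℤ)} (hB : RowsNested B) {i : ℤ}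
    (hi : ∀ m ∈ rowMultiset B, m ≤ rowCount B i) (j : ℤ) : rowSet B j ⊆ rowSet B i := by
  by_cases hj : j ∈ B.image Prod.fst
  · refine (hB j i).elim id fun hij => (eq_of_subset_of_card_le hij ?_).ge
    rw [← rowCount_eq_card_rowSet, ← rowCount_eq_card_rowSet]
    exact hi _ (Multiset.mem_map_of_mem _ (mem_val.mpr hj))
  · intro y hy
    exact absurd (mem_image_of_mem Prod.fst (mem_rowSet.mp hy)) hj

theorem card_rookPlacements_eq_of_rowMultiset_eq {B B' : Finset (ℤ × ℤ)} (hB : RowsNested B)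
    (hB' : RowsNested B') (hrows : rowMultiset B = rowMultiset B') (k : ℕ) :
    #(rookPlacements B k) = #(rookPlacements B' k) := by
  obtain ⟨n, hn⟩ : ∃ n, Multiset.card (rowMultiset B) = n := ⟨_, rfl⟩
  induction n generalizing B B' k with
  | zero =>
    have hB0 : rowMultiset B = 0 := Multiset.card_eq_zero.mp hn
    have hB'0 : rowMultiset B' = 0 := hrows ▸ hB0
    rw [rowMultiset_eq_zero_iff.mp hB0, rowMultiset_eq_zero_iff.mp hB'0]
  | succ n ih =>
    have hne : B.Nonempty := nonempty_iff_ne_empty.mpr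
      (mt rowMultiset_eq_zero_iff.mpr (Multiset.card_pos.mp (by omega)))
    obtain ⟨i, hi, hmax⟩ := exists_max_rowCount hne
    have hlongest : rowCount B i ∈ rowMultiset B' :=
      hrows ▸ (Multiset.mem_map_of_mem _ (mem_val.mpr hi) : rowCount B i ∈ rowMultiset B)
    obtain ⟨i', hi', hii'⟩ := Multiset.mem_map.mp hlongest
    rw [mem_val] at hi'
    have hmax' : ∀ m ∈ rowMultiset B', m ≤ rowCount B' i' := hii' ▸ hrows ▸ hmax
    have hrest : rowMultiset (eraseRow B i) = rowMultiset (eraseRow B' i') := by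
      rw [← Multiset.cons_inj_right (rowCount B i), ← rowMultiset_eq_cons hi, hrows, ← hii',
        ← rowMultiset_eq_cons hi']
    have hn' : Multiset.card (rowMultiset (eraseRow B i)) = n := by
      rw [rowMultiset_eq_cons hi, Multiset.card_cons] at hn
      omega
    have ih' k := ih (hB.eraseRow i) (hB'.eraseRow i') hrest k hn'
    cases k with
    | zero => rw [rookPlacements_zero, rookPlacements_zero]
    | succ k =>
      rw [card_rookPlacements_succ_of_forall_rowSet_subset (hB.rowSet_subset_of_forall_le hmax),
        card_rookPlacements_succ_of_forall_rowSet_subset (hB'.rowSet_subset_of_forall_le hmax'),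
        ih', ih', ← rowCount_eq_card_rowSet, ← rowCount_eq_card_rowSet, hii']

theorem stmt10_general (P : Finset (ℤ × ℤ)) (hP : IsLConvex P) (n : ℕ) (h : ℕ → ℕ)
    (hdec : ∀ i j : ℕ, i ≤ j → j < n → h j ≤ h i)
    (hrows : rowMultiset (ferrerCellsZ n h) = rowMultiset P) :
    (∀ k, (rookPlacements P k).card = (rookPlacements (ferrerCellsZ n h) k).card) ∧
    {k | (rookPlacements P k).Nonempty} =
      {k | (rookPlacements (ferrerCellsZ n h) k).Nonempty} := by
  have hcard (k : ℕ) : #(rookPlacements P k) = #(rookPlacements (ferrerCellsZ n h) k) :=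
    card_rookPlacements_eq_of_rowMultiset_eq hP.cornerClosed.rowsNested
      (cornerClosed_ferrerCellsZ hdec).rowsNested hrows.symm k
  refine ⟨hcard, Set.ext fun k => ?_⟩
  simp only [Set.mem_ofPred_eq, ← card_pos, hcard]

/-- Let `P` be an L-convex polyomino and `P*` the Ferrer diagram obtained by
sorting the row lengths and column lengths of `P` decreasingly. Then for every `k`
the numbers of placements of `k` non-attacking rooks on `P` and on `P*` agree, and
in particular the maximal numbers of non-attacking rooks coincide. -/
theorem stmt10 (P : Finset (ℤ × ℤ)) (hP : IsLConvex P) (n : ℕ) (h : ℕ → ℕ)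
    (hdec : ∀ i j : ℕ, i ≤ j → j < n → h j ≤ h i) (hpos : ∀ i, i < n → 0 < h i)
    (hrows : rowMultiset (ferrerCellsZ n h) = rowMultiset P)
    (hcols : colMultiset (ferrerCellsZ n h) = colMultiset P) :
    (∀ k, (rookPlacements P k).card = (rookPlacements (ferrerCellsZ n h) k).card) ∧
    {k | (rookPlacements P k).Nonempty} =
      {k | (rookPlacements (ferrerCellsZ n h) k).Nonempty} :=
  stmt10_general P hP n h hdec hrows
end
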